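/- For every 0 ≤ k ≤ n−1 and all k ≤ l, l' ≤ n−1, the inner products ⟨q_{k,l}, q_{k,l'}⟩ := q_{k,l}ᵀ R conj(q_{k,l'}) satisfy: ⟨q_{k,l}, q_{k,l'}⟩ = 0 whenever l ≠ l', and ⟨q_{k,l}, q_{k,l}⟩ is a strictly positive real number. -/

import Mathlib

open Matrix
open scoped ComplexOrder

noncomputable section

/-- The `k`-th standard basis vector of `ℂⁿ` (zero if `k ≥ n`). -/
def eVec (n : ℕ) (k : ℕ) : Fin n → ℂ := fun j => if (j : ℕ) = k then 1 else 0

/-- `vᵀ R w`. -/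
def bform {n : ℕ} (R : Matrix (Fin n) (Fin n) ℂ) (v w : Fin n → ℂ) : ℂ :=
  v ⬝ᵥ R.mulVec w

/-- Joint recursion computing the pair `(p_{k,k+d}, q_{k,k+d})`. -/
def pqAux {n : ℕ} (R : Matrix (Fin n) (Fin n) ℂ) : ℕ → ℕ → (Fin n → ℂ) × (Fin n → ℂ)
  | 0, k => (eVec n k, eVec n k)
  | d + 1, k =>
      let p := (pqAux R d k).1
      let q := (pqAux R d (k + 1)).2
      let l := k + d + 1
      let a := bform R p (eVec n l) / bform R q (eVec n l)
      let a' := bform R q (eVec n k) / bform R p (eVec n k)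
      (p - a • q, q - a' • p)

/-- The orthogonal polynomial `p_{k,l}`. -/
def pVec {n : ℕ} (R : Matrix (Fin n) (Fin n) ℂ) (k l : ℕ) : Fin n → ℂ :=
  (pqAux R (l - k) k).1

/-- The orthogonal polynomial `q_{k,l}`. -/
def qVec {n : ℕ} (R : Matrix (Fin n) (Fin n) ℂ) (k l : ℕ) : Fin n → ℂ :=
  (pqAux R (l - k) k).2

/-- The generalized reflection coefficient `a_{k,l}`. -/
def aCoef {n : ℕ} (R : Matrix (Fin n) (Fin n) ℂ) (k l : ℕ) : ℂ :=
  bform R (pVec R k (l - 1)) (eVec n l) / bform R (qVec R (k + 1) l) (eVec n l)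

/-- The generalized reflection coefficient `a'_{k,l}`. -/
def aCoef' {n : ℕ} (R : Matrix (Fin n) (Fin n) ℂ) (k l : ℕ) : ℂ :=
  bform R (qVec R (k + 1) l) (eVec n k) / bform R (pVec R k (l - 1)) (eVec n k)

/-- `v_{k,l} = q_{k,l}ᵀ R e_l`. -/
def vSc {n : ℕ} (R : Matrix (Fin n) (Fin n) ℂ) (k l : ℕ) : ℂ :=
  bform R (qVec R k l) (eVec n l)

/-- `v'_{k,l} = p_{k,l}ᵀ R e_k`. -/
def vSc' {n : ℕ} (R : Matrix (Fin n) (Fin n) ℂ) (k l : ℕ) : ℂ :=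
  bform R (pVec R k l) (eVec n k)

lemma eVec_eq_single {n : ℕ} (j : Fin n) : eVec n (j : ℕ) = Pi.single j 1 := by
  funext i
  simp [eVec, Fin.val_eq_val, Pi.single_apply]

lemma bform_eVec {n : ℕ} (R : Matrix (Fin n) (Fin n) ℂ) (v : Fin n → ℂ) (j : Fin n) :
    bform R v (eVec n j) = ∑ i, v i * R i j := by
  rw [bform, eVec_eq_single]
  simp [Matrix.mulVec_single, dotProduct]

lemma bform_expand {n : ℕ} (R : Matrix (Fin n) (Fin n) ℂ) (v w : Fin n → ℂ) :
    bform R v w = ∑ j, w j * bform R v (eVec n j) := by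
  simp only [bform_eVec]
  simp only [bform, dotProduct, Matrix.mulVec, dotProduct, Finset.mul_sum]
  rw [Finset.sum_comm]
  refine Finset.sum_congr rfl fun i _ => Finset.sum_congr rfl fun j _ => ?_
  ring

lemma bform_sub_smul {n : ℕ} (R : Matrix (Fin n) (Fin n) ℂ) (v w u : Fin n → ℂ) (a : ℂ) :
    bform R (v - a • w) u = bform R v u - a * bform R w u := by
  simp [bform, sub_dotProduct, smul_dotProduct, smul_eq_mul]

lemma bform_star_symm {n : ℕ} {R : Matrix (Fin n) (Fin n) ℂ} (hR : R.IsHermitian)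
    (v w : Fin n → ℂ) : bform R v (star w) = star (bform R w (star v)) := by
  simp only [bform, dotProduct, Matrix.mulVec, dotProduct, Finset.mul_sum, star_sum,
    Pi.star_apply, star_mul', star_star]
  rw [Finset.sum_comm]
  refine Finset.sum_congr rfl fun i _ => Finset.sum_congr rfl fun j _ => ?_
  have hij : star (R i j) = R j i := by
    conv_rhs => rw [← hR]
    simp [Matrix.conjTranspose_apply]
  rw [hij]
  ring

lemma bform_star_self_pos {n : ℕ} {R : Matrix (Fin n) (Fin n) ℂ} (hR : R.PosDef)
    {v : Fin n → ℂ} (hv : v ≠ 0) : 0 < bform R v (star v) := by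
  have h2 := hR.dotProduct_mulVec_pos (x := star v) (by simpa using hv)
  simpa [bform, star_star] using h2

lemma bform_star_self_eq {n : ℕ} {R : Matrix (Fin n) (Fin n) ℂ} (hR : R.PosDef)
    (v : Fin n → ℂ) (m : Fin n) (hlead : v m = 1)
    (horth : ∀ j : Fin n, j ≠ m → v j = 0 ∨ bform R v (eVec n j) = 0) :
    bform R v (star v) = bform R v (eVec n (m : ℕ)) ∧
      0 < bform R v (eVec n (m : ℕ)) := by
  have hv : v ≠ 0 := by
    intro h
    rw [h] at hlead
    simp at hlead
  have hexp : bform R v (star v) = bform R v (eVec n (m : ℕ)) := by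
    rw [bform_expand R v (star v)]
    rw [Finset.sum_eq_single m]
    · simp [hlead]
    · intro j _ hj
      rcases horth j hj with h | h <;> simp [h]
    · intro h
      exact absurd (Finset.mem_univ m) h
  refine ⟨hexp, ?_⟩
  rw [← hexp]
  exact bform_star_self_pos hR hv

lemma key {n : ℕ} (hn : 1 ≤ n) (R : Matrix (Fin n) (Fin n) ℂ) (hR : R.PosDef) :
    ∀ d k : ℕ, k + d ≤ n - 1 →
      ((∀ j : Fin n, ((j : ℕ) < k ∨ k + d < (j : ℕ)) → (pqAux R d k).1 j = 0) ∧
       (∀ j : Fin n, (j : ℕ) = k → (pqAux R d k).1 j = 1) ∧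
       (∀ j : Fin n, k < (j : ℕ) → (j : ℕ) ≤ k + d → bform R (pqAux R d k).1 (eVec n j) = 0)) ∧
      ((∀ j : Fin n, ((j : ℕ) < k ∨ k + d < (j : ℕ)) → (pqAux R d k).2 j = 0) ∧
       (∀ j : Fin n, (j : ℕ) = k + d → (pqAux R d k).2 j = 1) ∧
       (∀ j : Fin n, k ≤ (j : ℕ) → (j : ℕ) < k + d → bform R (pqAux R d k).2 (eVec n j) = 0)) := by
  intro d
  induction d with
  | zero =>
    intro k hk
    constructor <;> refine ⟨?_, ?_, ?_⟩ <;> intro j h1 <;>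
      simp_all [pqAux, eVec] <;> omega
  | succ d ih =>
    intro k hk
    obtain ⟨⟨hps, hpl, hpo⟩, -⟩ := ih k (by omega)
    obtain ⟨-, hqs, hql, hqo⟩ := ih (k + 1) (by omega)
    have hln : k + d + 1 < n := by omega
    have hkn : k < n := by omega
    have hqlead : (pqAux R d (k + 1)).2 ⟨k + d + 1, hln⟩ = 1 :=
      hql _ (by show k + d + 1 = k + 1 + d; omega)
    have hqpos := bform_star_self_eq hR (pqAux R d (k + 1)).2 ⟨k + d + 1, hln⟩ hqlead
      (fun j hj => by
        have hj' : (j : ℕ) ≠ k + d + 1 := fun hc => hj (Fin.ext hc)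
        by_cases hc : k + 1 ≤ (j : ℕ) ∧ (j : ℕ) ≤ k + 1 + d
        · exact Or.inr (hqo j hc.1 (by omega))
        · exact Or.inl (hqs j (by omega)))
    have hqne : bform R (pqAux R d (k + 1)).2 (eVec n (k + d + 1)) ≠ 0 := hqpos.2.ne'
    have hplead : (pqAux R d k).1 ⟨k, hkn⟩ = 1 := hpl _ rfl
    have hppos := bform_star_self_eq hR (pqAux R d k).1 ⟨k, hkn⟩ hplead
      (fun j hj => by
        have hj' : (j : ℕ) ≠ k := fun hc => hj (Fin.ext hc)
        by_cases hc : k ≤ (j : ℕ) ∧ (j : ℕ) ≤ k + d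
        · exact Or.inr (hpo j (by omega) hc.2)
        · exact Or.inl (hps j (by omega)))
    have hpne : bform R (pqAux R d k).1 (eVec n k) ≠ 0 := hppos.2.ne'
    have hpq : pqAux R (d + 1) k =
        ((pqAux R d k).1 -
            (bform R (pqAux R d k).1 (eVec n (k + d + 1)) /
              bform R (pqAux R d (k + 1)).2 (eVec n (k + d + 1))) • (pqAux R d (k + 1)).2,
          (pqAux R d (k + 1)).2 -
            (bform R (pqAux R d (k + 1)).2 (eVec n k) /
              bform R (pqAux R d k).1 (eVec n k)) • (pqAux R d k).1) := rfl
    rw [hpq]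
    refine ⟨⟨?_, ?_, ?_⟩, ⟨?_, ?_, ?_⟩⟩
    · intro j hj
      simp only [Pi.sub_apply, Pi.smul_apply, smul_eq_mul]
      rw [hps j (by omega), hqs j (by omega)]
      ring
    · intro j hj
      simp only [Pi.sub_apply, Pi.smul_apply, smul_eq_mul]
      rw [hpl j hj, hqs j (Or.inl (by omega))]
      ring
    · intro j h1 h2
      rw [bform_sub_smul]
      rcases eq_or_lt_of_le h2 with he | hlt
      · rw [show ((j : ℕ)) = k + d + 1 from by omega]
        rw [div_mul_cancel₀ _ hqne, sub_self]
      · rw [hpo j h1 (by omega), hqo j (by omega) (by omega)]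
        ring
    · intro j hj
      simp only [Pi.sub_apply, Pi.smul_apply, smul_eq_mul]
      rw [hqs j (by omega), hps j (by omega)]
      ring
    · intro j hj
      simp only [Pi.sub_apply, Pi.smul_apply, smul_eq_mul]
      rw [hql j (by omega), hps j (Or.inr (by omega))]
      ring
    · intro j h1 h2
      rw [bform_sub_smul]
      rcases eq_or_lt_of_le h1 with he | hlt
      · rw [show ((j : ℕ)) = k from by omega]
        rw [div_mul_cancel₀ _ hpne, sub_self]
      · rw [hqo j (by omega) (by omega), hpo j (by omega) (by omega)]
        ring

lemma qkey {n : ℕ} (hn : 1 ≤ n) (R : Matrix (Fin n) (Fin n) ℂ) (hR : R.PosDef)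
    (k l : ℕ) (hkl : k ≤ l) (hl : l ≤ n - 1) :
    (∀ j : Fin n, ((j : ℕ) < k ∨ l < (j : ℕ)) → qVec R k l j = 0) ∧
    (∀ j : Fin n, (j : ℕ) = l → qVec R k l j = 1) ∧
    (∀ j : Fin n, k ≤ (j : ℕ) → (j : ℕ) < l → bform R (qVec R k l) (eVec n j) = 0) := by
  have h := (key hn R hR (l - k) k (by omega)).2
  rw [show k + (l - k) = l from by omega] at h
  exact h

lemma ortho_lt {n : ℕ} (hn : 1 ≤ n) (R : Matrix (Fin n) (Fin n) ℂ) (hR : R.PosDef)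
    (k l l' : ℕ) (hkl' : k ≤ l') (hll : l' < l) (hl : l ≤ n - 1) :
    bform R (qVec R k l) (star (qVec R k l')) = 0 := by
  obtain ⟨hs', -, -⟩ := qkey hn R hR k l' hkl' (by omega)
  obtain ⟨-, -, ho⟩ := qkey hn R hR k l (by omega) hl
  rw [bform_expand]
  refine Finset.sum_eq_zero fun j _ => ?_
  by_cases hc : k ≤ (j : ℕ) ∧ (j : ℕ) ≤ l'
  · rw [ho j hc.1 (by omega), mul_zero]
  · rw [Pi.star_apply, hs' j (by omega)]
    simp

lemma qpos {n : ℕ} (hn : 1 ≤ n) (R : Matrix (Fin n) (Fin n) ℂ) (hR : R.PosDef)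
    (k l : ℕ) (hkl : k ≤ l) (hl : l ≤ n - 1) :
    0 < bform R (qVec R k l) (star (qVec R k l)) := by
  obtain ⟨hs, hlead, ho⟩ := qkey hn R hR k l hkl hl
  have hln : l < n := by omega
  have h := bform_star_self_eq hR (qVec R k l) ⟨l, hln⟩ (hlead _ rfl)
    (fun j hj => by
      have hj' : (j : ℕ) ≠ l := fun hc => hj (Fin.ext hc)
      by_cases hc : k ≤ (j : ℕ) ∧ (j : ℕ) < l
      · exact Or.inr (ho j hc.1 hc.2)
      · exact Or.inl (hs j (by omega)))
  rw [h.1]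
  exact h.2

/-- Orthogonality of the family `q_{k,·}` with respect to `⟨v,w⟩ = vᵀ R conj w`:
distinct members are orthogonal, and each has strictly positive self-inner-product. -/
theorem stmt5 (n : ℕ) (hn : 1 ≤ n) (R : Matrix (Fin n) (Fin n) ℂ) (hR : R.PosDef) :
    ∀ k l l' : ℕ, k ≤ l → k ≤ l' → l ≤ n - 1 → l' ≤ n - 1 →
      (l ≠ l' → bform R (qVec R k l) (star (qVec R k l')) = 0) ∧
      0 < bform R (qVec R k l) (star (qVec R k l)) := by
  intro k l l' hkl hkl' hln hl'n
  refine ⟨fun hne => ?_, qpos hn R hR k l hkl hln⟩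
  rcases lt_or_gt_of_ne hne with h | h
  · rw [bform_star_symm hR.1, ortho_lt hn R hR k l' l hkl h hl'n, star_zero]
  · exact ortho_lt hn R hR k l l' hkl' h hln
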